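/- arXiv:2109.03083 — 2 statements merged into one kernel-verified Lean document; each statement's English description precedes it below -/
import Mathlib

section
/- Let n be a positive integer and let b, b' be distinct integers with ⌊n/3⌋ < b, b' ≤ ⌈2n/3⌉. Then at most one of the three numbers (b+b')/2, 2b'−b, 2b−b' is an integer strictly greater than ⌈2n/3⌉. -/
/-- For distinct `b, b' ∈ I₂ = (⌊n/3⌋, ⌈2n/3⌉]`, at most one of the three numbers
`(b+b')/2`, `2b'−b`, `2b−b'` is an integer strictly greater than `⌈2n/3⌉`. -/
theorem middle_pair_at_most_one_right_threat (n : ℕ) (hn : 0 < n) (b b' : ℤ)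
    (hbb' : b ≠ b')
    (hb1 : (n : ℤ) / 3 < b) (hb2 : b ≤ (((2 * n + 2 : ℕ) / 3 : ℕ) : ℤ))
    (hb'1 : (n : ℤ) / 3 < b') (hb'2 : b' ≤ (((2 * n + 2 : ℕ) / 3 : ℕ) : ℤ)) :
    (if 2 ∣ (b + b') ∧ (((2 * n + 2 : ℕ) / 3 : ℕ) : ℤ) < (b + b') / 2 then 1 else 0) +
    (if (((2 * n + 2 : ℕ) / 3 : ℕ) : ℤ) < 2 * b' - b then 1 else 0) +
    (if (((2 * n + 2 : ℕ) / 3 : ℕ) : ℤ) < 2 * b - b' then 1 else 0) ≤ 1 := by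
  split_ifs <;> omega
end

section
/- Let n be a positive integer and b ∈ I₃ = (⌈2n/3⌉, n], b' ∈ I₂ = (⌊n/3⌋, ⌈2n/3⌉]. Then at most two of the three numbers (b+b')/2, 2b'−b, 2b−b' are integers lying in I₃. -/
/-- For `b ∈ I₃ = (⌈2n/3⌉, n]` and `b' ∈ I₂ = (⌊n/3⌋, ⌈2n/3⌉]`, at most two of the
three numbers `(b+b')/2`, `2b'−b`, `2b−b'` are integers lying in `I₃`. -/
theorem right_middle_pair_two_threats (n : ℕ) (hn : 0 < n) (b b' : ℤ)
    (hb1 : (((2 * n + 2 : ℕ) / 3 : ℕ) : ℤ) < b) (hb2 : b ≤ (n : ℤ))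
    (hb'1 : (n : ℤ) / 3 < b') (hb'2 : b' ≤ (((2 * n + 2 : ℕ) / 3 : ℕ) : ℤ)) :
    (if 2 ∣ (b + b') ∧ (((2 * n + 2 : ℕ) / 3 : ℕ) : ℤ) < (b + b') / 2 ∧
        (b + b') / 2 ≤ (n : ℤ) then 1 else 0) +
    (if (((2 * n + 2 : ℕ) / 3 : ℕ) : ℤ) < 2 * b' - b ∧ 2 * b' - b ≤ (n : ℤ)
      then 1 else 0) +
    (if (((2 * n + 2 : ℕ) / 3 : ℕ) : ℤ) < 2 * b - b' ∧ 2 * b - b' ≤ (n : ℤ)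
      then 1 else 0) ≤ 2 := by
  split_ifs <;> omega
end
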